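/- Suppose c ∈ ℂ^{ℤ_d×ℤ_d} satisfies Tc = vv* for some v ∈ ℂ^d with v_0 ≠ 0. Then the symbols of c satisfy the Riesz-type factorisation |p_j(z)|² = p_0(z)·p_0(ω^j z) for every j ∈ ℤ_d and every complex z with z^d = 1. -/

import Mathlib

open Matrix Complex

/-- `ω = exp(2πi/d)`, a primitive `d`-th root of unity. -/
noncomputable def omegaRoot (d : ℕ) : ℂ := Complex.exp (2 * Real.pi * Complex.I / d)

/-- The cyclic shift matrix `S`, `S_{jk} = δ_{j,k+1}`. -/
def Smat (d : ℕ) [NeZero d] : Matrix (ZMod d) (ZMod d) ℂ :=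
  Matrix.of fun j k => if j = k + 1 then 1 else 0

/-- The modulation matrix `Ω`, `Ω_{jk} = ω^j δ_{jk}`. -/
noncomputable def Omat (d : ℕ) [NeZero d] : Matrix (ZMod d) (ZMod d) ℂ :=
  Matrix.of fun j k => if j = k then omegaRoot d ^ j.val else 0

/-- The reconstruction operator `T`, `Tc = (1/d) Σ_{j,k} c_{jk} (S^j Ω^k)^*`. -/
noncomputable def Trec (d : ℕ) [NeZero d] (c : Matrix (ZMod d) (ZMod d) ℂ) :
    Matrix (ZMod d) (ZMod d) ℂ :=
  (1 / (d : ℂ)) • ∑ j : ZMod d, ∑ k : ZMod d, c j k • (Smat d ^ j.val * Omat d ^ k.val)ᴴ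

/-- The `j`-th symbol of `c`: `p_j(z) = Σ_r c_{-j,r} (ω^j z)^{-r}`. -/
noncomputable def symb (d : ℕ) [NeZero d] (c : Matrix (ZMod d) (ZMod d) ℂ)
    (j : ZMod d) (z : ℂ) : ℂ :=
  ∑ r : ZMod d, c (-j) r * (omegaRoot d ^ j.val * z) ^ (-(r.val : ℤ))

/-!
Every `z` with `z^d = 1` is `ω^s`, and there the symbol is a rescaled entry of the reconstruction:
`p_j(ω^s) = d · (Tc)_{j+s, s}`, because the `(a, b)` entry of `(S^j Ω^k)^*` vanishes unless
`b = a + j`, where it is `ω^{-a k}`. A matrix `vv^*` satisfies `|A_{ab}|² = A_{aa} A_{bb}`, and for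
`a = j + s`, `b = s` the two diagonal entries are `p_0(ω^j z) / d` and `p_0(z) / d`.
-/

theorem Matrix.vecMulVec_star_self_norm_sq {ι : Type*} (v : ι → ℂ) (a b : ι) :
    (‖vecMulVec v (star v) a b‖ : ℂ) ^ 2
      = vecMulVec v (star v) b b * vecMulVec v (star v) a a := by
  rw [← ofReal_pow, Complex.sq_norm, ← mul_conj]
  simp only [vecMulVec_apply, Pi.star_apply, Complex.star_def, map_mul, conj_conj]
  ring

section

variable (d : ℕ) [NeZero d]

theorem isPrimitiveRoot_omegaRoot : IsPrimitiveRoot (omegaRoot d) d := by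
  simpa [omegaRoot] using Complex.isPrimitiveRoot_exp d (NeZero.ne d)

omit [NeZero d] in
theorem conj_omegaRoot : starRingEnd ℂ (omegaRoot d) = (omegaRoot d)⁻¹ := by
  rw [omegaRoot, ← Complex.exp_conj, ← Complex.exp_neg, map_div₀, map_mul, map_mul,
    Complex.conj_I, map_natCast, Complex.conj_ofReal, map_ofNat]
  ring_nf

variable {d} in
theorem omegaRoot_pow_eq_pow {m n : ℕ} (h : (m : ZMod d) = n) :
    omegaRoot d ^ m = omegaRoot d ^ n := by
  have hζ := isPrimitiveRoot_omegaRoot d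
  rwa [(hζ.isOfFinOrder (NeZero.ne d)).pow_eq_pow_iff_modEq, ← hζ.eq_orderOf,
    ← ZMod.natCast_eq_natCast_iff]

theorem Smat_pow_apply (n : ℕ) (a b : ZMod d) :
    (Smat d ^ n) a b = if a = b + n then 1 else 0 := by
  induction n generalizing b with
  | zero => simp [Matrix.one_apply]
  | succ n ih =>
    rw [pow_succ, Matrix.mul_apply, Finset.sum_eq_single (b + 1)]
    · rw [ih]
      simp [Smat, add_assoc, add_comm (1 : ZMod d)]
    · intro i _ hi
      simp [Smat, hi]
    · simp

theorem Omat_eq_diagonal : Omat d = diagonal fun a => omegaRoot d ^ a.val := by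
  ext a b
  simp [Omat, diagonal_apply]

theorem conjTranspose_Smat_pow_mul_Omat_pow_apply (n m : ℕ) (a b : ZMod d) :
    (Smat d ^ n * Omat d ^ m)ᴴ a b
      = if b = a + n then (omegaRoot d ^ (a.val * m))⁻¹ else 0 := by
  rw [conjTranspose_apply, Omat_eq_diagonal, diagonal_pow, mul_diagonal, Smat_pow_apply]
  split_ifs <;> simp [pow_mul, conj_omegaRoot]

theorem Trec_apply (c : Matrix (ZMod d) (ZMod d) ℂ) (a b : ZMod d) :
    Trec d c a b = (1 / (d : ℂ)) * ∑ k, c (b - a) k * (omegaRoot d ^ (a.val * k.val))⁻¹ := by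
  have hcast : ∀ j : ZMod d, (b = a + (j.val : ZMod d)) ↔ b - a = j := by
    intro j
    rw [ZMod.natCast_zmod_val, sub_eq_iff_eq_add']
  simp only [Trec, Matrix.smul_apply, Matrix.sum_apply, smul_eq_mul,
    conjTranspose_Smat_pow_mul_Omat_pow_apply, hcast, mul_ite, mul_zero]
  rw [Finset.sum_comm]
  simp

theorem symb_omegaRoot_pow (c : Matrix (ZMod d) (ZMod d) ℂ) (j : ZMod d) (s : ℕ) :
    symb d c j (omegaRoot d ^ s) = d * Trec d c (j + s) s := by
  have hd : (d : ℂ) ≠ 0 := Nat.cast_ne_zero.mpr (NeZero.ne d)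
  rw [Trec_apply, ← mul_assoc, mul_one_div_cancel hd, one_mul, symb, sub_add_cancel_right]
  refine Finset.sum_congr rfl fun r _ => congrArg (c (-j) r * ·) ?_
  rw [← pow_add, _root_.zpow_neg, zpow_natCast, ← pow_mul]
  congr 1
  apply omegaRoot_pow_eq_pow
  push_cast [ZMod.natCast_val, ZMod.cast_id]
  ring

end

theorem stmt16_general (d : ℕ) [NeZero d] (c : Matrix (ZMod d) (ZMod d) ℂ)
    (h : ∃ v : ZMod d → ℂ, Trec d c = Matrix.vecMulVec v (star v) ∧ v 0 ≠ 0) :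
    ∀ j : ZMod d, ∀ z : ℂ, z ^ d = 1 →
      ((‖symb d c j z‖ : ℂ)) ^ 2
        = symb d c 0 z * symb d c 0 (omegaRoot d ^ j.val * z) := by
  obtain ⟨v, hv, -⟩ := h
  intro j z hz
  obtain ⟨s, -, rfl⟩ := (isPrimitiveRoot_omegaRoot d).eq_pow_of_pow_eq_one hz
  have hshift : ((j.val + s : ℕ) : ZMod d) = j + s := by
    rw [Nat.cast_add, ZMod.natCast_zmod_val]
  rw [← pow_add, symb_omegaRoot_pow, symb_omegaRoot_pow, symb_omegaRoot_pow, hshift, zero_add,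
    zero_add, hv, norm_mul, ofReal_mul, mul_pow, vecMulVec_star_self_norm_sq, norm_natCast,
    ofReal_natCast]
  ring

theorem stmt16 (d : ℕ) [NeZero d] (hd : 2 ≤ d) (c : Matrix (ZMod d) (ZMod d) ℂ)
    (h : ∃ v : ZMod d → ℂ, Trec d c = Matrix.vecMulVec v (star v) ∧ v 0 ≠ 0) :
    ∀ j : ZMod d, ∀ z : ℂ, z ^ d = 1 →
      ((‖symb d c j z‖ : ℂ)) ^ 2
        = symb d c 0 z * symb d c 0 (omegaRoot d ^ j.val * z) :=
  stmt16_general d c h
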